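/- Let C be a left Rees category and define λ(a) = |[aC, d(a)C]| − 1 for each arrow a. Then: (i) λ(ab) = λ(a) + λ(b) whenever the product ab is defined; (ii) λ(a) = 0 if and only if a is invertible; (iii) λ(a) = 1 if and only if a is an atom. Hence λ is a length functor on C. -/
import Mathlib


open CategoryTheory

universe v u

variable {C : Type u} [Category.{v} C]

/-- The set of all arrows of a category, as a sigma type. -/
abbrev CatArr (C : Type u) [Category.{v} C] : Type (max u v) := Σ (X : C) (Y : C), X ⟶ Y

/-- An arrow is an atom if it is not invertible and in any factorization one factor
is invertible. -/
def IsAtomArrow {X Y : C} (a : X ⟶ Y) : Prop :=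
  ¬ IsIso a ∧ ∀ ⦃Z : C⦄ (b : X ⟶ Z) (c : Z ⟶ Y), a = b ≫ c → IsIso b ∨ IsIso c

/-- The principal right ideal `aC` generated by an arrow `a`. -/
def rIdeal {X Y : C} (a : X ⟶ Y) : Set (CatArr C) :=
  { p | ∃ (Z : C) (b : Y ⟶ Z), p = ⟨X, Z, a ≫ b⟩ }

/-- The principal left ideal `Ca` generated by an arrow `a`. -/
def lIdeal {X Y : C} (a : X ⟶ Y) : Set (CatArr C) :=
  { p | ∃ (Z : C) (b : Z ⟶ X), p = ⟨Z, Y, b ≫ a⟩ }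

/-- The principal two-sided ideal `CaC` generated by an arrow `a`. -/
def twoIdeal {X Y : C} (a : X ⟶ Y) : Set (CatArr C) :=
  { p | ∃ (W Z : C) (b : W ⟶ X) (c : Y ⟶ Z), p = ⟨W, Z, b ≫ a ≫ c⟩ }

/-- A category is left cancellative if `ax = ay` implies `x = y`. -/
def LeftCancellativeCat (C : Type u) [Category.{v} C] : Prop :=
  ∀ ⦃X Y Z : C⦄ (a : X ⟶ Y) (x y : Y ⟶ Z), a ≫ x = a ≫ y → x = y

/-- A category is right cancellative if `xa = ya` implies `x = y`. -/
def RightCancellativeCat (C : Type u) [Category.{v} C] : Prop :=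
  ∀ ⦃X Y Z : C⦄ (x y : X ⟶ Y) (a : Y ⟶ Z), x ≫ a = y ≫ a → x = y

/-- A category is right rigid if principal right ideals that intersect are comparable. -/
def RightRigid (C : Type u) [Category.{v} C] : Prop :=
  ∀ ⦃X Y X' Y' : C⦄ (a : X ⟶ Y) (b : X' ⟶ Y'),
    (rIdeal a ∩ rIdeal b).Nonempty → rIdeal a ⊆ rIdeal b ∨ rIdeal b ⊆ rIdeal a

/-- A category is equidivisible if every equality `ab = cd` admits an intermediate arrow. -/
def Equidivisible (C : Type u) [Category.{v} C] : Prop :=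
  ∀ ⦃W X Y Z : C⦄ (a : W ⟶ X) (b : X ⟶ Z) (c : W ⟶ Y) (d : Y ⟶ Z),
    a ≫ b = c ≫ d →
      (∃ u : Y ⟶ X, a = c ≫ u ∧ d = u ≫ b) ∨ (∃ v : X ⟶ Y, c = a ≫ v ∧ b = v ≫ d)

/-- A length functor on a category: additive on composition, zero exactly on invertible
arrows, one exactly on atoms. -/
structure LengthFunctor (C : Type u) [Category.{v} C] where
  len : ∀ ⦃X Y : C⦄, (X ⟶ Y) → ℕ
  len_comp : ∀ ⦃X Y Z : C⦄ (f : X ⟶ Y) (g : Y ⟶ Z), len (f ≫ g) = len f + len g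
  len_eq_zero_iff : ∀ ⦃X Y : C⦄ (f : X ⟶ Y), len f = 0 ↔ IsIso f
  len_eq_one_iff : ∀ ⦃X Y : C⦄ (f : X ⟶ Y), len f = 1 ↔ IsAtomArrow f

/-- A subset of the arrows is a principal right ideal if it has the form `xC`. -/
def IsPrincipalRightIdeal (S : Set (CatArr C)) : Prop :=
  ∃ (U V : C) (x : U ⟶ V), S = rIdeal x

/-- The interval `[aC, bC]` of principal right ideals between `aC` and `bC`. -/
def rInterval {X Y Z W : C} (a : X ⟶ Y) (b : Z ⟶ W) : Set (Set (CatArr C)) :=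
  { S | IsPrincipalRightIdeal S ∧ rIdeal a ⊆ S ∧ S ⊆ rIdeal b }

/-- A left Rees category: left cancellative, right rigid, and each principal right
ideal is properly contained in only finitely many principal right ideals. -/
def IsLeftReesCategory (C : Type u) [Category.{v} C] : Prop :=
  LeftCancellativeCat C ∧ RightRigid C ∧
    ∀ ⦃X Y : C⦄ (a : X ⟶ Y),
      { S : Set (CatArr C) | IsPrincipalRightIdeal S ∧ rIdeal a ⊂ S }.Finite

/-- A category is skeletal if every invertible arrow has equal domain and codomain. -/
def SkeletalCat (C : Type u) [Category.{v} C] : Prop :=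
  ∀ ⦃X Y : C⦄ (g : X ⟶ Y), IsIso g → X = Y

section ReesAux

lemma mem_rIdeal_self {X Y : C} (a : X ⟶ Y) : (⟨X, Y, a⟩ : CatArr C) ∈ rIdeal a :=
  ⟨Y, 𝟙 Y, by simp [rIdeal]⟩

lemma rIdeal_mono {X Y V : C} {a : X ⟶ Y} {x : X ⟶ V} (c : V ⟶ Y) (h : a = x ≫ c) :
    rIdeal a ⊆ rIdeal x := by
  rintro p ⟨Z, d, rfl⟩
  exact ⟨Z, c ≫ d, by rw [h, Category.assoc]⟩

lemma rIdeal_subset_id {X V : C} (x : X ⟶ V) : rIdeal x ⊆ rIdeal (𝟙 X) := by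
  rintro p ⟨Z, d, rfl⟩
  exact ⟨Z, x ≫ d, by simp⟩

lemma mem_dom_eq {X Y U V : C} {a : X ⟶ Y} {x : U ⟶ V}
    (h : (⟨X, Y, a⟩ : CatArr C) ∈ rIdeal x) : U = X := by
  obtain ⟨Z, c, he⟩ := h
  exact (congrArg Sigma.fst he).symm

lemma mem_rIdeal_iff {X Y V : C} (m : X ⟶ V) (x : X ⟶ Y) :
    (⟨X, V, m⟩ : CatArr C) ∈ rIdeal x ↔ ∃ c : Y ⟶ V, m = x ≫ c := by
  constructor
  · rintro ⟨Z, c, he⟩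
    injection he with h1 h2
    injection h2 with h3 h4
    subst h3
    exact ⟨c, eq_of_heq h4⟩
  · rintro ⟨c, rfl⟩
    exact ⟨V, c, rfl⟩

lemma isIso_of_id_factor (hc : LeftCancellativeCat C) {X Y : C} {a : X ⟶ Y} {c : Y ⟶ X}
    (h : 𝟙 X = a ≫ c) : IsIso a := by
  refine ⟨⟨c, h.symm, ?_⟩⟩
  apply hc a
  rw [← Category.assoc, ← h, Category.id_comp, Category.comp_id]

lemma rIdeal_isIso {X V : C} (g : X ⟶ V) (hg : IsIso g) : rIdeal g = rIdeal (𝟙 X) :=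
  subset_antisymm (rIdeal_subset_id g) (rIdeal_mono (inv g) (by simp))

lemma self_mem_interval {X Y : C} (a : X ⟶ Y) : rIdeal a ∈ rInterval a (𝟙 X) :=
  ⟨⟨X, Y, a, rfl⟩, subset_rfl, rIdeal_subset_id a⟩

lemma id_mem_interval {X Y : C} (a : X ⟶ Y) : rIdeal (𝟙 X) ∈ rInterval a (𝟙 X) :=
  ⟨⟨X, X, 𝟙 X, rfl⟩, rIdeal_subset_id a, subset_rfl⟩

lemma interval_finite
    (h3 : ∀ ⦃X Y : C⦄ (a : X ⟶ Y),
      { S : Set (CatArr C) | IsPrincipalRightIdeal S ∧ rIdeal a ⊂ S }.Finite)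
    {X Y Z W : C} (a : X ⟶ Y) (b : Z ⟶ W) : (rInterval a b).Finite := by
  apply ((h3 a).insert (rIdeal a)).subset
  rintro S ⟨hP, hsub, -⟩
  rcases eq_or_ne S (rIdeal a) with rfl | hne
  · exact Set.mem_insert _ _
  · exact Set.mem_insert_of_mem _ ⟨hP, hsub.ssubset_of_ne hne.symm⟩

lemma comp_subset_iff (hc : LeftCancellativeCat C) {X Y V V' : C}
    (a : X ⟶ Y) (u : Y ⟶ V) (u' : Y ⟶ V') :
    rIdeal (a ≫ u) ⊆ rIdeal (a ≫ u') ↔ rIdeal u ⊆ rIdeal u' := by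
  constructor
  · intro h
    have hm := h (mem_rIdeal_self _)
    rw [mem_rIdeal_iff] at hm
    obtain ⟨c, hcEq⟩ := hm
    have hu : u = u' ≫ c := hc a _ _ (by rw [hcEq, Category.assoc])
    exact rIdeal_mono c hu
  · intro h
    have hm := h (mem_rIdeal_self u)
    rw [mem_rIdeal_iff] at hm
    obtain ⟨c, hcEq⟩ := hm
    exact rIdeal_mono c (by rw [hcEq, Category.assoc])

/-- Left multiplication by `a` on sets of arrows out of `a`'s codomain. -/
def compMap {X Y : C} (a : X ⟶ Y) (S : Set (CatArr C)) : Set (CatArr C) :=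
  { p | ∃ (Z : C) (m : Y ⟶ Z), (⟨Y, Z, m⟩ : CatArr C) ∈ S ∧ p = ⟨X, Z, a ≫ m⟩ }

lemma compMap_rIdeal {X Y V : C} (a : X ⟶ Y) (u : Y ⟶ V) :
    compMap a (rIdeal u) = rIdeal (a ≫ u) := by
  ext p
  constructor
  · rintro ⟨Z, m, hm, rfl⟩
    rw [mem_rIdeal_iff] at hm
    obtain ⟨c, rfl⟩ := hm
    exact ⟨Z, c, by rw [Category.assoc]⟩
  · rintro ⟨Z, c, rfl⟩
    exact ⟨Z, u ≫ c, ⟨Z, c, rfl⟩, by rw [Category.assoc]⟩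

lemma bijOn_compMap (hc : LeftCancellativeCat C) {X Y Z : C} (a : X ⟶ Y) (b : Y ⟶ Z) :
    Set.BijOn (compMap a) (rInterval b (𝟙 Y)) (rInterval (a ≫ b) a) := by
  refine ⟨?_, ?_, ?_⟩
  · rintro S ⟨⟨U, V, u, rfl⟩, h1, h2⟩
    obtain rfl : U = Y := mem_dom_eq (h1 (mem_rIdeal_self b))
    rw [compMap_rIdeal]
    exact ⟨⟨X, V, a ≫ u, rfl⟩, (comp_subset_iff hc a b u).2 h1, rIdeal_mono u rfl⟩
  · rintro S ⟨⟨U, V, u, rfl⟩, h1, -⟩ S' ⟨⟨U', V', u', rfl⟩, h1', -⟩ hEq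
    obtain rfl := mem_dom_eq (h1 (mem_rIdeal_self b))
    obtain rfl := mem_dom_eq (h1' (mem_rIdeal_self b))
    rw [compMap_rIdeal, compMap_rIdeal] at hEq
    exact subset_antisymm ((comp_subset_iff hc a u u').1 hEq.le)
      ((comp_subset_iff hc a u' u).1 hEq.ge)
  · rintro T ⟨⟨U, V, x, rfl⟩, h1, h2⟩
    obtain rfl : U = X := mem_dom_eq (h1 (mem_rIdeal_self _))
    have hx := h2 (mem_rIdeal_self x)
    rw [mem_rIdeal_iff] at hx
    obtain ⟨u, rfl⟩ := hx
    have hab := h1 (mem_rIdeal_self (a ≫ b))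
    rw [mem_rIdeal_iff] at hab
    obtain ⟨v, hv⟩ := hab
    have hbv : b = u ≫ v := hc a _ _ (by rw [hv, Category.assoc])
    exact ⟨rIdeal u, ⟨⟨Y, V, u, rfl⟩, rIdeal_mono v hbv, rIdeal_subset_id u⟩,
      compMap_rIdeal a u⟩

lemma interval_split (hr : RightRigid C) {X Y Z : C} (a : X ⟶ Y) (b : Y ⟶ Z) :
    rInterval (a ≫ b) (𝟙 X) = rInterval (a ≫ b) a ∪ rInterval a (𝟙 X) := by
  apply subset_antisymm
  · rintro S ⟨hP, h1, h2⟩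
    obtain ⟨U, V, x, rfl⟩ := hP
    have hne : (rIdeal x ∩ rIdeal a).Nonempty :=
      ⟨⟨X, Z, a ≫ b⟩, h1 (mem_rIdeal_self _), ⟨Z, b, rfl⟩⟩
    rcases hr x a hne with hsub | hsub
    · exact Or.inl ⟨⟨U, V, x, rfl⟩, h1, hsub⟩
    · exact Or.inr ⟨⟨U, V, x, rfl⟩, hsub, h2⟩
  · rintro S (⟨hP, h1, h2⟩ | ⟨hP, h1, h2⟩)
    · exact ⟨hP, h1, h2.trans (rIdeal_subset_id a)⟩
    · exact ⟨hP, (rIdeal_mono b rfl).trans h1, h2⟩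

lemma interval_inter {X Y Z : C} (a : X ⟶ Y) (b : Y ⟶ Z) :
    rInterval (a ≫ b) a ∩ rInterval a (𝟙 X) = {rIdeal a} := by
  apply subset_antisymm
  · rintro S ⟨⟨-, -, h2⟩, ⟨-, h3, -⟩⟩
    exact subset_antisymm h2 h3
  · rintro S rfl
    exact ⟨⟨⟨X, Y, a, rfl⟩, rIdeal_mono b rfl, subset_rfl⟩, self_mem_interval a⟩

lemma interval_eq_singleton_of_isIso {X Y : C} (a : X ⟶ Y) (ha : IsIso a) :
    rInterval a (𝟙 X) = {rIdeal a} := by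
  apply subset_antisymm
  · rintro S ⟨-, h1, h2⟩
    have hXa : rIdeal (𝟙 X) ⊆ rIdeal a := rIdeal_mono (inv a) (by simp)
    exact subset_antisymm (h2.trans hXa) h1
  · rintro S rfl
    exact self_mem_interval a

end ReesAux

/-- In a left Rees category, `λ(a) = |[aC, d(a)C]| - 1` is additive on
composition, vanishes exactly on invertible arrows and equals one exactly on atoms;
hence it is a length functor. -/
theorem interval_card_sub_one_is_length (h : IsLeftReesCategory C) :
    (∀ ⦃X Y Z : C⦄ (a : X ⟶ Y) (b : Y ⟶ Z),
        (rInterval (a ≫ b) (𝟙 X)).ncard - 1 =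
          ((rInterval a (𝟙 X)).ncard - 1) + ((rInterval b (𝟙 Y)).ncard - 1)) ∧
    (∀ ⦃X Y : C⦄ (a : X ⟶ Y), (rInterval a (𝟙 X)).ncard - 1 = 0 ↔ IsIso a) ∧
    (∀ ⦃X Y : C⦄ (a : X ⟶ Y), (rInterval a (𝟙 X)).ncard - 1 = 1 ↔ IsAtomArrow a) := by
  obtain ⟨hc, hr, hf⟩ := h
  refine ⟨?_, ?_, ?_⟩
  · -- additivity
    intro X Y Z a b
    have hA : (rInterval (a ≫ b) a).Finite := interval_finite hf _ _
    have hB : (rInterval a (𝟙 X)).Finite := interval_finite hf _ _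
    have hbij := bijOn_compMap hc a b
    have hcardA : (rInterval b (𝟙 Y)).ncard = (rInterval (a ≫ b) a).ncard := by
      rw [← hbij.image_eq]
      exact (Set.ncard_image_of_injOn hbij.injOn).symm
    have hu := Set.ncard_union_add_ncard_inter _ _ hA hB
    rw [interval_inter a b, Set.ncard_singleton] at hu
    have hA1 : 0 < (rInterval (a ≫ b) a).ncard :=
      (Set.ncard_pos hA).2 ⟨rIdeal (a ≫ b), ⟨X, Z, a ≫ b, rfl⟩, subset_rfl, rIdeal_mono b rfl⟩
    have hB1 : 0 < (rInterval a (𝟙 X)).ncard :=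
      (Set.ncard_pos hB).2 ⟨rIdeal a, self_mem_interval a⟩
    rw [interval_split hr a b, hcardA]
    omega
  · -- zero iff iso
    intro X Y a
    constructor
    · intro h0
      have hfin := interval_finite hf a (𝟙 X)
      have hpos : 0 < (rInterval a (𝟙 X)).ncard :=
        (Set.ncard_pos hfin).2 ⟨rIdeal a, self_mem_interval a⟩
      have h1 : (rInterval a (𝟙 X)).ncard = 1 := by omega
      obtain ⟨s, hs⟩ := Set.ncard_eq_one.mp h1
      have e1 : rIdeal a = s := by
        have := self_mem_interval a; rw [hs] at this; exact this
      have e2 : rIdeal (𝟙 X) = s := by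
        have := id_mem_interval a; rw [hs] at this; exact this
      have hmem : (⟨X, X, 𝟙 X⟩ : CatArr C) ∈ rIdeal a := by
        rw [e1, ← e2]; exact mem_rIdeal_self _
      rw [mem_rIdeal_iff] at hmem
      obtain ⟨c, hcEq⟩ := hmem
      exact isIso_of_id_factor hc hcEq
    · intro ha
      rw [interval_eq_singleton_of_isIso a ha, Set.ncard_singleton]
  · -- one iff atom
    intro X Y a
    have hfin := interval_finite hf a (𝟙 X)
    constructor
    · intro h1
      have h2 : (rInterval a (𝟙 X)).ncard = 2 := by omega
      have hne : rIdeal a ≠ rIdeal (𝟙 X) := by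
        intro he
        have hsing : rInterval a (𝟙 X) = {rIdeal a} := by
          apply subset_antisymm
          · rintro S ⟨-, hs1, hs2⟩
            exact subset_antisymm (he ▸ hs2) hs1
          · rintro S rfl
            exact self_mem_interval a
        rw [hsing, Set.ncard_singleton] at h2
        omega
      obtain ⟨s, t, hst, hI⟩ := Set.ncard_eq_two.mp h2
      have hcov : ∀ S ∈ rInterval a (𝟙 X), S = rIdeal a ∨ S = rIdeal (𝟙 X) := by
        intro S hS
        have hSmem : S ∈ ({s, t} : Set (Set (CatArr C))) := hI ▸ hS
        have hamem : rIdeal a ∈ ({s, t} : Set (Set (CatArr C))) := hI ▸ self_mem_interval a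
        have himem : rIdeal (𝟙 X) ∈ ({s, t} : Set (Set (CatArr C))) := hI ▸ id_mem_interval a
        simp only [Set.mem_insert_iff, Set.mem_singleton_iff] at hSmem hamem himem
        rcases hamem with h1' | h1' <;> rcases himem with h2' | h2'
        · exact absurd (h1'.trans h2'.symm) hne
        · rcases hSmem with h3 | h3
          exacts [Or.inl (h3.trans h1'.symm), Or.inr (h3.trans h2'.symm)]
        · rcases hSmem with h3 | h3
          exacts [Or.inr (h3.trans h2'.symm), Or.inl (h3.trans h1'.symm)]
        · exact absurd (h1'.trans h2'.symm) hne
      constructor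
      · intro hiso
        exact hne (rIdeal_isIso a hiso)
      · intro Z b c habc
        have hbmem : rIdeal b ∈ rInterval a (𝟙 X) :=
          ⟨⟨X, Z, b, rfl⟩, rIdeal_mono c habc, rIdeal_subset_id b⟩
        rcases hcov _ hbmem with hb | hb
        · -- rIdeal b = rIdeal a : then c is iso
          have hbm : (⟨X, Z, b⟩ : CatArr C) ∈ rIdeal a := hb ▸ mem_rIdeal_self b
          rw [mem_rIdeal_iff] at hbm
          obtain ⟨w, hw⟩ := hbm
          have hwc : w ≫ c = 𝟙 Y :=
            hc a _ _ (by rw [← Category.assoc, ← hw, ← habc, Category.comp_id])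
          have hcw : c ≫ w = 𝟙 Z :=
            hc b _ _ (by rw [← Category.assoc, ← habc, ← hw, Category.comp_id])
          exact Or.inr ⟨⟨w, hcw, hwc⟩⟩
        · -- rIdeal b = rIdeal (𝟙 X) : then b is iso
          have hbm : (⟨X, X, 𝟙 X⟩ : CatArr C) ∈ rIdeal b := hb ▸ mem_rIdeal_self (𝟙 X)
          rw [mem_rIdeal_iff] at hbm
          obtain ⟨u, hu⟩ := hbm
          exact Or.inl (isIso_of_id_factor hc hu)
    · rintro ⟨hni, hatom⟩
      have hne : rIdeal a ≠ rIdeal (𝟙 X) := by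
        intro he
        have hmem : (⟨X, X, 𝟙 X⟩ : CatArr C) ∈ rIdeal a := he ▸ mem_rIdeal_self (𝟙 X)
        rw [mem_rIdeal_iff] at hmem
        obtain ⟨c, hcEq⟩ := hmem
        exact hni (isIso_of_id_factor hc hcEq)
      have hI : rInterval a (𝟙 X) = {rIdeal a, rIdeal (𝟙 X)} := by
        apply subset_antisymm
        · rintro S ⟨⟨U, V, x, rfl⟩, h1, h2⟩
          obtain rfl : U = X := mem_dom_eq (h1 (mem_rIdeal_self a))
          have hax := h1 (mem_rIdeal_self a)
          rw [mem_rIdeal_iff] at hax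
          obtain ⟨cc, hcc⟩ := hax
          rcases hatom x cc hcc with hx | hcx
          · exact Or.inr (rIdeal_isIso x hx)
          · refine Or.inl (subset_antisymm ?_ h1)
            exact rIdeal_mono (inv cc) (by rw [hcc, Category.assoc]; simp)
        · rintro S (rfl | rfl)
          exacts [self_mem_interval a, id_mem_interval a]
      rw [hI, Set.ncard_pair hne]
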